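/- arXiv:2009.09135 — 3 statements merged into one kernel-verified Lean document; each statement's English description precedes it below -/
import Mathlib

section
/- For all (x,v) ∈ ℝⁿ×ℝⁿ, the Lie derivative of V along the heavy-ball field satisfies ⟨∇V(x,v), X_hb(x,v)⟩ ≤ −(√μ/4)·V(x,v); that is, ⟨√μ_s∇f(x) + √μ v + 2μ(x−x*), v⟩ + ⟨v + √μ(x−x*), −2√μ v − √μ_s∇f(x)⟩ ≤ −(√μ/4)V(x,v). -/
open scoped RealInnerProductSpace

set_option maxHeartbeats 1000000 in
/-- Lie derivative of the Lyapunov function V along the heavy-ball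
field X_hb satisfies ⟨∇V(x,v), X_hb(x,v)⟩ ≤ −(√μ/4)·V(x,v). -/
theorem stmt_0 {n : ℕ} (μ L s : ℝ) (hμ : 0 < μ) (hμL : μ ≤ L) (hs : 0 < s)
    (f : EuclideanSpace ℝ (Fin n) → ℝ)
    (f' : EuclideanSpace ℝ (Fin n) → EuclideanSpace ℝ (Fin n))
    (hgrad : ∀ x, HasGradientAt f (f' x) x)
    (hconv : ∀ x y, f y - f x ≥ ⟪f' x, y - x⟫ + μ / 2 * ‖y - x‖ ^ 2)
    (hlip : ∀ x y, ‖f' x - f' y‖ ≤ L * ‖x - y‖)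
    (xs : EuclideanSpace ℝ (Fin n)) (hmin : ∀ x, f xs ≤ f x) (hgs : f' xs = 0)
    (x v : EuclideanSpace ℝ (Fin n)) :
    ⟪(1 + Real.sqrt (μ * s)) • f' x + Real.sqrt μ • v + (2 * μ) • (x - xs), v⟫
      + ⟪v + Real.sqrt μ • (x - xs),
          -((2 * Real.sqrt μ) • v) - (1 + Real.sqrt (μ * s)) • f' x⟫
    ≤ -(Real.sqrt μ / 4) *
        ((1 + Real.sqrt (μ * s)) * (f x - f xs) + (1 / 4) * ‖v‖ ^ 2
          + (1 / 4) * ‖v + (2 * Real.sqrt μ) • (x - xs)‖ ^ 2) := by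
  set m := Real.sqrt μ with hmdef
  set a := 1 + Real.sqrt (μ * s) with hadef
  set r := x - xs with hrdef
  set g := f' x with hgdef
  have hm : 0 < m := Real.sqrt_pos.2 hμ
  have hm2 : m ^ 2 = μ := Real.sq_sqrt hμ.le
  have ha : (1 : ℝ) ≤ a := by
    have := Real.sqrt_nonneg (μ * s); linarith
  have hΔ : 0 ≤ f x - f xs := by linarith [hmin x]
  -- strong convexity at x evaluated at y = xs
  have hsc := hconv x xs
  have hxs : xs - x = -r := by simp [hrdef]
  rw [hxs, inner_neg_right, norm_neg] at hsc
  -- expand the first inner product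
  have e1 : ⟪a • g + m • v + (2 * μ) • r, v⟫
      = a * ⟪g, v⟫ + m * ‖v‖ ^ 2 + 2 * μ * ⟪r, v⟫ := by
    simp only [inner_add_left, real_inner_smul_left, real_inner_self_eq_norm_sq]
    try ring
  -- expand the second inner product
  have e2 : ⟪v + m • r, -((2 * m) • v) - a • g⟫
      = -(2 * m) * ‖v‖ ^ 2 - a * ⟪v, g⟫ - 2 * m ^ 2 * ⟪r, v⟫ - m * a * ⟪r, g⟫ := by
    simp only [inner_add_left, inner_sub_right, inner_neg_right, real_inner_smul_left,
      real_inner_smul_right, real_inner_self_eq_norm_sq]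
    try ring
  -- expand the norm of the sum
  have e3 : ‖v + (2 * m) • r‖ ^ 2
      = ‖v‖ ^ 2 + 2 * (2 * m) * ⟪v, r⟫ + (2 * m) ^ 2 * ‖r‖ ^ 2 := by
    rw [norm_add_sq_real, real_inner_smul_right, norm_smul]
    have : ‖(2 * m : ℝ)‖ = 2 * m := by
      rw [Real.norm_eq_abs, abs_of_pos]; linarith
    rw [this]; ring
  -- key AM-GM bound: 0 ≤ ‖v - (2m) • r‖²
  have e4 : (0 : ℝ) ≤ ‖v‖ ^ 2 - 2 * (2 * m) * ⟪v, r⟫ + (2 * m) ^ 2 * ‖r‖ ^ 2 := by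
    have h := sq_nonneg ‖v - (2 * m) • r‖
    rw [norm_sub_sq_real, real_inner_smul_right, norm_smul] at h
    have h2 : ‖(2 * m : ℝ)‖ = 2 * m := by
      rw [Real.norm_eq_abs, abs_of_pos]; linarith
    rw [h2] at h; linarith
  have hc1 : ⟪v, g⟫ = ⟪g, v⟫ := real_inner_comm _ _
  have hc2 : ⟪v, r⟫ = ⟪r, v⟫ := real_inner_comm _ _
  have hc3 : ⟪g, r⟫ = ⟪r, g⟫ := real_inner_comm _ _
  rw [hc2] at e4
  rw [e1, e2, e3, hc1, hc2]
  rw [hc3] at hsc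
  have hP : ⟪r, g⟫ ≥ (f x - f xs) + m ^ 2 / 2 * ‖r‖ ^ 2 := by rw [hm2]; linarith
  have hma : (0 : ℝ) ≤ m * a := by positivity
  have h5 := mul_le_mul_of_nonneg_left hP hma
  have h6 := mul_nonneg (show (0:ℝ) ≤ m / 16 by positivity) e4
  have hnr : (0 : ℝ) ≤ ‖r‖ ^ 2 := sq_nonneg _
  have hnv : (0 : ℝ) ≤ ‖v‖ ^ 2 := sq_nonneg _
  rw [← hm2]
  clear_value m a r g
  clear hmdef hadef hrdef hgdef hsc hconv hlip hmin hgrad hgs hm2 hμL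
  nlinarith [h5, h6, mul_nonneg hm.le hnr, mul_nonneg hm.le hnv,
    mul_nonneg hm.le hΔ,
    mul_nonneg (mul_nonneg hm.le (by linarith : (0:ℝ) ≤ a - 1)) hΔ,
    mul_nonneg (mul_nonneg (mul_nonneg (mul_nonneg hm.le hm.le) hm.le)
      (by linarith : (0:ℝ) ≤ a - 1)) hnr]
end

section
/- Let β₁ = √μ_s·μ, β₂ = √μ_s·L/√μ, β₃ = 13√μ/16, and β₄ = (4μ²√s + 3L√μ·√μ_s)/(8L²). Fix positive reals n̲ ≤ n̄ and m̲ ≤ m̄, and let a ≥ 0 be such that either −β₁m̲² + β₂m̄n̄ ≤ 0, or a ≤ (β₃m̲² + β₄n̲²)/(−β₁m̲² + β₂m̄n̄). Then for every (x,v) ∈ ℝⁿ×ℝⁿ with n̲ ≤ ‖∇f(x)‖ < n̄ and m̲ ≤ ‖v‖ < m̄, one has ⟨∇V(x,v), X^a_hb(x,v)⟩ ≤ −(√μ/4)V(x,v). -/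
open scoped RealInnerProductSpace

/-!
Expanding `lieV` and `Vf`, the claim becomes an inequality between `‖v‖`, `‖∇f(x)‖`,
`‖x - x*‖`, `f x - f x*` and four inner products. Strong convexity bounds `⟪∇f(x), x - x*⟫`
from below and makes `∇f` strongly monotone, a Young inequality absorbs `⟪v, x - x*⟫`, and
Cauchy–Schwarz with the Lipschitz bound controls the drift `∇f(x + a v) - ∇f(x)`. The descent
lemma and `μ ‖x - x*‖ ≤ ‖∇f(x)‖ ≤ L ‖x - x*‖` then give, for every `(x, v)`,
`lieV + (√μ/4) V ≤ -(β₃‖v‖² + β₄‖∇f(x)‖²) + a (-β₁‖v‖² + β₂‖v‖‖∇f(x)‖)`,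
and on the region the condition on `a` makes the right-hand side nonpositive.
-/

noncomputable section

/-- √μ_s := 1 + √(μs) -/
def ms (μ s : ℝ) : ℝ := 1 + Real.sqrt (μ * s)

/-- Lyapunov function V(x,v). -/
def Vf {n : ℕ} (μ s : ℝ) (f : EuclideanSpace ℝ (Fin n) → ℝ)
    (xs x v : EuclideanSpace ℝ (Fin n)) : ℝ :=
  ms μ s * (f x - f xs) + (1 / 4) * ‖v‖ ^ 2
    + (1 / 4) * ‖v + (2 * Real.sqrt μ) • (x - xs)‖ ^ 2

/-- ⟨∇V(x,v), X^a_hb(x,v)⟩ written out. -/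
def lieV {n : ℕ} (μ s : ℝ) (f' : EuclideanSpace ℝ (Fin n) → EuclideanSpace ℝ (Fin n))
    (xs : EuclideanSpace ℝ (Fin n)) (a : ℝ) (x v : EuclideanSpace ℝ (Fin n)) : ℝ :=
  ⟪ms μ s • f' x + Real.sqrt μ • v + (2 * μ) • (x - xs), v⟫
    + ⟪v + Real.sqrt μ • (x - xs),
        -((2 * Real.sqrt μ) • v) - ms μ s • f' (x + a • v)⟫

def beta1 (μ s : ℝ) : ℝ := ms μ s * μ
def beta2 (μ L s : ℝ) : ℝ := ms μ s * L / Real.sqrt μ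
def beta3 (μ : ℝ) : ℝ := 13 * Real.sqrt μ / 16
def beta4 (μ L s : ℝ) : ℝ :=
  (4 * μ ^ 2 * Real.sqrt s + 3 * L * Real.sqrt μ * ms μ s) / (8 * L ^ 2)

section LipschitzGradient

variable {E : Type*} [NormedAddCommGroup E] [InnerProductSpace ℝ E] [CompleteSpace E]
  {f : E → ℝ} {f' : E → E} {L : ℝ}

theorem le_add_inner_add_of_lipschitz_gradient (hgrad : ∀ x, HasGradientAt f (f' x) x)
    (hlip : ∀ x y, ‖f' x - f' y‖ ≤ L * ‖x - y‖) (x u : E) :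
    f (x + u) ≤ f x + ⟪f' x, u⟫ + L / 2 * ‖u‖ ^ 2 := by
  -- the gap to the quadratic upper model decreases along the segment from `x` to `x + u`
  set ψ : ℝ → ℝ := fun t => f (x + t • u) - t * ⟪f' x, u⟫ - L / 2 * ‖u‖ ^ 2 * t ^ 2
  have hψ : ∀ t : ℝ, HasDerivAt ψ (⟪f' (x + t • u) - f' x, u⟫ - L * ‖u‖ ^ 2 * t) t := by
    intro t
    have hline : HasDerivAt (fun t : ℝ => x + t • u) u t := by
      simpa using ((hasDerivAt_id t).smul_const u).const_add x
    refine ((((hgrad _).hasFDerivAt.comp_hasDerivAt t hline).sub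
      (hasDerivAt_mul_const ⟪f' x, u⟫)).sub
      ((hasDerivAt_pow 2 t).const_mul (L / 2 * ‖u‖ ^ 2))).congr_deriv ?_
    simp only [inner_sub_left, InnerProductSpace.toDual_apply_apply]
    ring
  have hanti : AntitoneOn ψ (Set.Icc 0 1) := by
    refine antitoneOn_of_hasDerivWithinAt_nonpos (convex_Icc 0 1)
      (fun t _ => (hψ t).continuousAt.continuousWithinAt)
      (fun t _ => (hψ t).hasDerivWithinAt) fun t ht => ?_
    rw [interior_Icc] at ht
    rw [sub_nonpos]
    calc ⟪f' (x + t • u) - f' x, u⟫ ≤ ‖f' (x + t • u) - f' x‖ * ‖u‖ := real_inner_le_norm _ _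
      _ ≤ L * (t * ‖u‖) * ‖u‖ := by
        gcongr
        simpa [norm_smul, abs_of_pos ht.1] using hlip (x + t • u) x
      _ = L * ‖u‖ ^ 2 * t := by ring
  have := hanti (Set.left_mem_Icc.2 zero_le_one) (Set.right_mem_Icc.2 zero_le_one) zero_le_one
  simp only [ψ, zero_smul, one_smul, add_zero, zero_mul, one_mul, sub_zero, one_pow,
    mul_one, ne_eq, OfNat.ofNat_ne_zero, not_false_eq_true, zero_pow, mul_zero] at this
  linarith

end LipschitzGradient

section LipschitzGradient

variable {E : Type*} [NormedAddCommGroup E] [InnerProductSpace ℝ E] [CompleteSpace E]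
  {f : E → ℝ} {f' : E → E} {L : ℝ}

theorem sq_norm_div_le_sub_of_isMin (hL : 0 < L) (hgrad : ∀ x, HasGradientAt f (f' x) x)
    (hlip : ∀ x y, ‖f' x - f' y‖ ≤ L * ‖x - y‖) {xs : E} (hmin : ∀ y, f xs ≤ f y) (x : E) :
    ‖f' x‖ ^ 2 / (2 * L) ≤ f x - f xs := by
  have hstep := le_add_inner_add_of_lipschitz_gradient hgrad hlip x (-(1 / L) • f' x)
  rw [real_inner_smul_right, real_inner_self_eq_norm_sq, norm_smul, mul_pow,
    Real.norm_eq_abs, sq_abs] at hstep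
  have hmodel : -(1 / L) * ‖f' x‖ ^ 2 + L / 2 * ((-(1 / L)) ^ 2 * ‖f' x‖ ^ 2)
      = -(‖f' x‖ ^ 2 / (2 * L)) := by
    field_simp
    ring
  linarith [hmin (x + -(1 / L) • f' x)]

end LipschitzGradient

section StrongConvexity

variable {E : Type*} [NormedAddCommGroup E] [InnerProductSpace ℝ E] {f : E → ℝ} {f' : E → E}
  {μ : ℝ}

theorem mul_sq_norm_le_inner_sub_of_strongConvex
    (hconv : ∀ x y, f y - f x ≥ ⟪f' x, y - x⟫ + μ / 2 * ‖y - x‖ ^ 2) (x y : E) :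
    μ * ‖x - y‖ ^ 2 ≤ ⟪f' x - f' y, x - y⟫ := by
  have hxy := hconv x y
  have hyx := hconv y x
  rw [← neg_sub x y, inner_neg_right, norm_neg] at hxy
  rw [inner_sub_left]
  linarith

theorem mul_norm_le_norm_sub_of_strongConvex
    (hconv : ∀ x y, f y - f x ≥ ⟪f' x, y - x⟫ + μ / 2 * ‖y - x‖ ^ 2) (x y : E) :
    μ * ‖x - y‖ ≤ ‖f' x - f' y‖ := by
  rcases (norm_nonneg (x - y)).eq_or_lt with hzero | hpos
  · simp [← hzero]
  · refine le_of_mul_le_mul_right ?_ hpos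
    calc μ * ‖x - y‖ * ‖x - y‖ = μ * ‖x - y‖ ^ 2 := by ring
      _ ≤ ⟪f' x - f' y, x - y⟫ := mul_sq_norm_le_inner_sub_of_strongConvex hconv x y
      _ ≤ ‖f' x - f' y‖ * ‖x - y‖ := real_inner_le_norm _ _

theorem mul_mul_sq_norm_le_inner_sub_of_strongConvex
    (hconv : ∀ x y, f y - f x ≥ ⟪f' x, y - x⟫ + μ / 2 * ‖y - x‖ ^ 2) {a : ℝ} (ha : 0 ≤ a)
    (x v : E) : μ * a * ‖v‖ ^ 2 ≤ ⟪v, f' (x + a • v) - f' x⟫ := by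
  rcases ha.eq_or_lt with rfl | hpos
  · simp
  · have h := mul_sq_norm_le_inner_sub_of_strongConvex hconv (x + a • v) x
    rw [add_sub_cancel_left, norm_smul, real_inner_smul_right, real_inner_comm,
      Real.norm_eq_abs, abs_of_pos hpos] at h
    exact le_of_mul_le_mul_left (by linarith) hpos

end StrongConvexity

theorem ms_sub_one {μ : ℝ} (hμ : 0 ≤ μ) (s : ℝ) : ms μ s - 1 = Real.sqrt μ * Real.sqrt s := by
  rw [ms, Real.sqrt_mul hμ, add_sub_cancel_left]

theorem one_le_ms (μ s : ℝ) : 1 ≤ ms μ s :=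
  le_add_of_nonneg_right (Real.sqrt_nonneg _)

theorem ms_nonneg (μ s : ℝ) : 0 ≤ ms μ s :=
  zero_le_one.trans (one_le_ms μ s)

theorem beta1_nonneg {μ : ℝ} (hμ : 0 ≤ μ) (s : ℝ) : 0 ≤ beta1 μ s :=
  mul_nonneg (ms_nonneg μ s) hμ

theorem beta2_nonneg (μ s : ℝ) {L : ℝ} (hL : 0 ≤ L) : 0 ≤ beta2 μ L s :=
  div_nonneg (mul_nonneg (ms_nonneg μ s) hL) (Real.sqrt_nonneg _)

theorem beta3_nonneg (μ : ℝ) : 0 ≤ beta3 μ := by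
  unfold beta3
  positivity

theorem beta4_nonneg (μ s : ℝ) {L : ℝ} (hL : 0 ≤ L) : 0 ≤ beta4 μ L s := by
  have := ms_nonneg μ s
  unfold beta4
  positivity

section Lyapunov

variable {n : ℕ} {μ s : ℝ}

theorem lieV_eq (hμ : 0 ≤ μ) (f' : EuclideanSpace ℝ (Fin n) → EuclideanSpace ℝ (Fin n))
    (a : ℝ) (xs x v : EuclideanSpace ℝ (Fin n)) :
    lieV μ s f' xs a x v
      = -(Real.sqrt μ * ‖v‖ ^ 2) - Real.sqrt μ * ms μ s * ⟪f' x, x - xs⟫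
        - ms μ s * ⟪v, f' (x + a • v) - f' x⟫
        - Real.sqrt μ * ms μ s * ⟪x - xs, f' (x + a • v) - f' x⟫ := by
  have hsq : Real.sqrt μ * Real.sqrt μ = μ := Real.mul_self_sqrt hμ
  simp only [lieV, inner_add_left, inner_sub_right, inner_sub_left,
    inner_neg_right, real_inner_smul_left, real_inner_smul_right, real_inner_self_eq_norm_sq,
    real_inner_comm (f' x)]
  linear_combination (-2 * ⟪x, v⟫ + 2 * ⟪xs, v⟫) * hsq

theorem Vf_eq (hμ : 0 ≤ μ) (f : EuclideanSpace ℝ (Fin n) → ℝ)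
    (xs x v : EuclideanSpace ℝ (Fin n)) :
    Vf μ s f xs x v = ms μ s * (f x - f xs) + 1 / 2 * ‖v‖ ^ 2
      + Real.sqrt μ * ⟪v, x - xs⟫ + μ * ‖x - xs‖ ^ 2 := by
  have hsq : Real.sqrt μ * Real.sqrt μ = μ := Real.mul_self_sqrt hμ
  rw [Vf, norm_add_sq_real, real_inner_smul_right, norm_smul, Real.norm_eq_abs,
    abs_of_nonneg (by positivity), mul_pow]
  linear_combination ‖x - xs‖ ^ 2 * hsq

variable {L : ℝ} {f : EuclideanSpace ℝ (Fin n) → ℝ}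
  {f' : EuclideanSpace ℝ (Fin n) → EuclideanSpace ℝ (Fin n)} {xs : EuclideanSpace ℝ (Fin n)}
  {a : ℝ}

theorem lieV_add_Vf_le (hμ : 0 ≤ μ)
    (hconv : ∀ x y, f y - f x ≥ ⟪f' x, y - x⟫ + μ / 2 * ‖y - x‖ ^ 2)
    (hlip : ∀ x y, ‖f' x - f' y‖ ≤ L * ‖x - y‖) (ha : 0 ≤ a) (x v : EuclideanSpace ℝ (Fin n)) :
    lieV μ s f' xs a x v + Real.sqrt μ / 4 * Vf μ s f xs x v
      ≤ -(beta3 μ * ‖v‖ ^ 2) - 3 * Real.sqrt μ * ms μ s / 4 * (f x - f xs)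
        - μ ^ 2 * Real.sqrt s / 2 * ‖x - xs‖ ^ 2
        + a * ms μ s * Real.sqrt μ * (L * ‖x - xs‖ * ‖v‖ - Real.sqrt μ * ‖v‖ ^ 2) := by
  rw [lieV_eq hμ, Vf_eq hμ, beta3]
  set p := Real.sqrt μ
  set c := ms μ s
  have hsq : p * p = μ := Real.mul_self_sqrt hμ
  have hc : c - 1 = p * Real.sqrt s := ms_sub_one hμ s
  have hp : 0 ≤ p := Real.sqrt_nonneg μ
  have hc0 : 0 ≤ c := ms_nonneg μ s
  have hgap : f x - f xs + μ / 2 * ‖x - xs‖ ^ 2 ≤ ⟪f' x, x - xs⟫ := by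
    have h := hconv x xs
    rw [← neg_sub x xs, inner_neg_right, norm_neg] at h
    linarith
  have hcross : ⟪v, x - xs⟫ ≤ ‖v‖ * ‖x - xs‖ := real_inner_le_norm _ _
  have hmono : μ * a * ‖v‖ ^ 2 ≤ ⟪v, f' (x + a • v) - f' x⟫ :=
    mul_mul_sq_norm_le_inner_sub_of_strongConvex hconv ha x v
  have hdrift : -⟪x - xs, f' (x + a • v) - f' x⟫ ≤ ‖x - xs‖ * (L * (a * ‖v‖)) := by
    calc -⟪x - xs, f' (x + a • v) - f' x⟫ ≤ ‖x - xs‖ * ‖f' (x + a • v) - f' x‖ := by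
          simpa only [inner_neg_right, norm_neg] using
            real_inner_le_norm (x - xs) (-(f' (x + a • v) - f' x))
      _ ≤ ‖x - xs‖ * (L * (a * ‖v‖)) := by
          gcongr
          simpa [norm_smul, abs_of_nonneg ha] using hlip (x + a • v) x
  have hyoung : 0 ≤ p * (‖v‖ - 2 * p * ‖x - xs‖) ^ 2 := by positivity
  rw [← hsq] at hgap hmono ⊢
  linear_combination (p * c) * hgap + (p * p / 4) * hcross + c * hmono + (p * c) * hdrift
    + (1 / 16) * hyoung - (p ^ 3 * ‖x - xs‖ ^ 2 / 2) * hc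

theorem lieV_add_Vf_le_beta (hμ : 0 < μ) (hμL : μ ≤ L)
    (hgrad : ∀ x, HasGradientAt f (f' x) x)
    (hconv : ∀ x y, f y - f x ≥ ⟪f' x, y - x⟫ + μ / 2 * ‖y - x‖ ^ 2)
    (hlip : ∀ x y, ‖f' x - f' y‖ ≤ L * ‖x - y‖) (hmin : ∀ x, f xs ≤ f x) (hgs : f' xs = 0)
    (ha : 0 ≤ a) (x v : EuclideanSpace ℝ (Fin n)) :
    lieV μ s f' xs a x v + Real.sqrt μ / 4 * Vf μ s f xs x v
      ≤ -(beta3 μ * ‖v‖ ^ 2 + beta4 μ L s * ‖f' x‖ ^ 2)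
        + a * (-beta1 μ s * ‖v‖ ^ 2 + beta2 μ L s * ‖v‖ * ‖f' x‖) := by
  have hL : 0 < L := hμ.trans_le hμL
  have hp : 0 < Real.sqrt μ := Real.sqrt_pos.2 hμ
  have hsq : Real.sqrt μ * Real.sqrt μ = μ := Real.mul_self_sqrt hμ.le
  have hc : 0 ≤ ms μ s := ms_nonneg μ s
  have hgapN : ‖f' x‖ ^ 2 / (2 * L) ≤ f x - f xs :=
    sq_norm_div_le_sub_of_isMin hL hgrad hlip hmin x
  have hNR : ‖f' x‖ ≤ L * ‖x - xs‖ := by simpa [hgs] using hlip x xs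
  have hRN : μ * ‖x - xs‖ ≤ ‖f' x‖ := by
    simpa [hgs] using mul_norm_le_norm_sub_of_strongConvex hconv x xs
  have hdecay : -(3 * Real.sqrt μ * ms μ s / 4 * (f x - f xs))
      - μ ^ 2 * Real.sqrt s / 2 * ‖x - xs‖ ^ 2 ≤ -(beta4 μ L s * ‖f' x‖ ^ 2) := by
    have hR : ‖f' x‖ ^ 2 / L ^ 2 ≤ ‖x - xs‖ ^ 2 := by
      rw [div_le_iff₀ (by positivity), ← mul_pow, mul_comm]
      gcongr
    have hsplit : beta4 μ L s * ‖f' x‖ ^ 2 = 3 * Real.sqrt μ * ms μ s / 4 * (‖f' x‖ ^ 2 / (2 * L))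
        + μ ^ 2 * Real.sqrt s / 2 * (‖f' x‖ ^ 2 / L ^ 2) := by
      unfold beta4
      field_simp
      ring
    have := mul_le_mul_of_nonneg_left hgapN (by positivity : 0 ≤ 3 * Real.sqrt μ * ms μ s / 4)
    have := mul_le_mul_of_nonneg_left hR (by positivity : 0 ≤ μ ^ 2 * Real.sqrt s / 2)
    linarith
  have hdrift : a * ms μ s * Real.sqrt μ * (L * ‖x - xs‖ * ‖v‖ - Real.sqrt μ * ‖v‖ ^ 2)
      ≤ a * (-beta1 μ s * ‖v‖ ^ 2 + beta2 μ L s * ‖v‖ * ‖f' x‖) := by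
    have hR : Real.sqrt μ * ‖x - xs‖ ≤ ‖f' x‖ / Real.sqrt μ := by
      rw [le_div_iff₀ hp, mul_right_comm, hsq]
      exact hRN
    have key := mul_le_mul_of_nonneg_left
      (mul_le_mul_of_nonneg_left hR (by positivity : 0 ≤ ms μ s * L * ‖v‖)) ha
    unfold beta1 beta2
    linear_combination key - a * ms μ s * ‖v‖ ^ 2 * hsq
  linarith [lieV_add_Vf_le (s := s) (xs := xs) hμ.le hconv hlip ha x v]

end Lyapunov

theorem mul_le_of_nonpos_or_le_div {a D K : ℝ} (ha : 0 ≤ a) (hK : 0 ≤ K)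
    (h : D ≤ 0 ∨ a ≤ K / D) : a * D ≤ K := by
  rcases le_or_gt D 0 with hD | hD
  · exact (mul_nonpos_of_nonneg_of_nonpos ha hD).trans hK
  · rcases h with h | h
    · exact absurd h hD.not_ge
    · exact (le_div_iff₀ hD).1 h

theorem stmt_6_general {n : ℕ} (μ L s : ℝ) (hμ : 0 < μ) (hμL : μ ≤ L)
    (f : EuclideanSpace ℝ (Fin n) → ℝ)
    (f' : EuclideanSpace ℝ (Fin n) → EuclideanSpace ℝ (Fin n))
    (hgrad : ∀ x, HasGradientAt f (f' x) x)
    (hconv : ∀ x y, f y - f x ≥ ⟪f' x, y - x⟫ + μ / 2 * ‖y - x‖ ^ 2)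
    (hlip : ∀ x y, ‖f' x - f' y‖ ≤ L * ‖x - y‖)
    (xs : EuclideanSpace ℝ (Fin n)) (hmin : ∀ x, f xs ≤ f x) (hgs : f' xs = 0)
    (nlo nhi mlo mhi : ℝ) (hnlo : 0 < nlo)
    (hmlo : 0 < mlo)
    (a : ℝ) (ha : 0 ≤ a)
    (hcond : -(beta1 μ s) * mlo ^ 2 + beta2 μ L s * mhi * nhi ≤ 0 ∨
      a ≤ (beta3 μ * mlo ^ 2 + beta4 μ L s * nlo ^ 2) /
            (-(beta1 μ s) * mlo ^ 2 + beta2 μ L s * mhi * nhi))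
    (x v : EuclideanSpace ℝ (Fin n))
    (hn1 : nlo ≤ ‖f' x‖) (hn2 : ‖f' x‖ < nhi)
    (hm1 : mlo ≤ ‖v‖) (hm2 : ‖v‖ < mhi) :
    lieV μ s f' xs a x v ≤ -(Real.sqrt μ / 4) * Vf μ s f xs x v := by
  have hL : 0 ≤ L := hμ.le.trans hμL
  have hβ1 := beta1_nonneg hμ.le s
  have hβ2 := beta2_nonneg μ s hL
  have hβ3 := beta3_nonneg μ
  have hβ4 := beta4_nonneg μ s hL
  have hpoint := lieV_add_Vf_le_beta (s := s) hμ hμL hgrad hconv hlip hmin hgs ha x v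
  have hlow : beta3 μ * mlo ^ 2 + beta4 μ L s * nlo ^ 2
      ≤ beta3 μ * ‖v‖ ^ 2 + beta4 μ L s * ‖f' x‖ ^ 2 := by
    gcongr
  have hhigh : -beta1 μ s * ‖v‖ ^ 2 + beta2 μ L s * ‖v‖ * ‖f' x‖
      ≤ -beta1 μ s * mlo ^ 2 + beta2 μ L s * mhi * nhi := by
    have hv : mlo ^ 2 ≤ ‖v‖ ^ 2 := by gcongr
    have hvg : ‖v‖ * ‖f' x‖ ≤ mhi * nhi :=
      mul_le_mul hm2.le hn2.le (norm_nonneg _) ((norm_nonneg v).trans hm2.le)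
    linarith [mul_le_mul_of_nonneg_left hv hβ1, mul_le_mul_of_nonneg_left hvg hβ2]
  have hrate := mul_le_of_nonpos_or_le_div ha (by positivity) hcond
  linarith [mul_le_mul_of_nonneg_left hhigh ha]

/-- adaptive gradient-displacement bound on a region
R = { (x,v) : n̲ ≤ ‖∇f(x)‖ < n̄, m̲ ≤ ‖v‖ < m̄ }. -/
theorem stmt_6 {n : ℕ} (μ L s : ℝ) (hμ : 0 < μ) (hμL : μ ≤ L) (hs : 0 < s)
    (f : EuclideanSpace ℝ (Fin n) → ℝ)
    (f' : EuclideanSpace ℝ (Fin n) → EuclideanSpace ℝ (Fin n))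
    (hgrad : ∀ x, HasGradientAt f (f' x) x)
    (hconv : ∀ x y, f y - f x ≥ ⟪f' x, y - x⟫ + μ / 2 * ‖y - x‖ ^ 2)
    (hlip : ∀ x y, ‖f' x - f' y‖ ≤ L * ‖x - y‖)
    (xs : EuclideanSpace ℝ (Fin n)) (hmin : ∀ x, f xs ≤ f x) (hgs : f' xs = 0)
    (nlo nhi mlo mhi : ℝ) (hnlo : 0 < nlo) (hn : nlo ≤ nhi)
    (hmlo : 0 < mlo) (hm : mlo ≤ mhi)
    (a : ℝ) (ha : 0 ≤ a)
    (hcond : -(beta1 μ s) * mlo ^ 2 + beta2 μ L s * mhi * nhi ≤ 0 ∨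
      a ≤ (beta3 μ * mlo ^ 2 + beta4 μ L s * nlo ^ 2) /
            (-(beta1 μ s) * mlo ^ 2 + beta2 μ L s * mhi * nhi))
    (x v : EuclideanSpace ℝ (Fin n))
    (hn1 : nlo ≤ ‖f' x‖) (hn2 : ‖f' x‖ < nhi)
    (hm1 : mlo ≤ ‖v‖) (hm2 : ‖v‖ < mhi) :
    lieV μ s f' xs a x v ≤ -(Real.sqrt μ / 4) * Vf μ s f xs x v :=
  stmt_6_general μ L s hμ hμL f f' hgrad hconv hlip xs hmin hgs nlo nhi mlo mhi hnlo hmlo a ha hcond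
    x v hn1 hn2 hm1 hm2

end
end

section
/- Fix a ≥ 0, p̂ = (x̂,v̂), and let (x(t), v(t)) be the high-order-hold trajectory as in the context. Let X^{a,p̂}(x,v) := (v, −2√μ v − √μ_s∇f(x̂ + a v̂)) denote the held vector field. Then for every t ≥ 0, ⟨∇V(p̂), X^{a,p̂}(x(t),v(t)) − X^{a,p̂}(x̂,v̂)⟩ = √μ_s⟨∇f(x̂), v(t) − v̂⟩ − √μ⟨v̂, v(t) − v̂⟩, and this quantity is bounded in absolute value by t‖2√μ v̂ + √μ_s∇f(x̂ + a v̂)‖·(√μ_s‖∇f(x̂)‖ + √μ‖v̂‖). -/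
open scoped RealInnerProductSpace

noncomputable section

/-- for the held field X^{a,p̂}(x,v) = (v, −2√μ v − √μ_s∇f(x̂+a v̂))
along the high-order-hold trajectory,
⟨∇V(p̂), X^{a,p̂}(p(t)) − X^{a,p̂}(p̂)⟩ = √μ_s⟨∇f(x̂), v(t) − v̂⟩ − √μ⟨v̂, v(t) − v̂⟩,
with absolute value at most t‖2√μ v̂ + √μ_s∇f(x̂+a v̂)‖(√μ_s‖∇f(x̂)‖ + √μ‖v̂‖). -/
theorem stmt_16 {n : ℕ} (μ L s : ℝ) (hμ : 0 < μ) (hμL : μ ≤ L) (hs : 0 < s)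
    (f : EuclideanSpace ℝ (Fin n) → ℝ)
    (f' : EuclideanSpace ℝ (Fin n) → EuclideanSpace ℝ (Fin n))
    (hgrad : ∀ x, HasGradientAt f (f' x) x)
    (hconv : ∀ x y, f y - f x ≥ ⟪f' x, y - x⟫ + μ / 2 * ‖y - x‖ ^ 2)
    (hlip : ∀ x y, ‖f' x - f' y‖ ≤ L * ‖x - y‖)
    (xs : EuclideanSpace ℝ (Fin n)) (hmin : ∀ x, f xs ≤ f x) (hgs : f' xs = 0)
    (a : ℝ) (ha : 0 ≤ a) (xh vh : EuclideanSpace ℝ (Fin n))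
    (x v : ℝ → EuclideanSpace ℝ (Fin n))
    (hX : ∀ t : ℝ, x t = xh
        - (((1 + Real.sqrt (μ * s)) * t) / (2 * Real.sqrt μ)) • f' (xh + a • vh)
        + ((1 - Real.exp (-(2 * Real.sqrt μ) * t)) / (4 * μ)) •
            ((1 + Real.sqrt (μ * s)) • f' (xh + a • vh) + (2 * Real.sqrt μ) • vh))
    (hV : ∀ t : ℝ, v t = Real.exp (-(2 * Real.sqrt μ) * t) • vh
        + ((Real.exp (-(2 * Real.sqrt μ) * t) - 1)
            * ((1 + Real.sqrt (μ * s)) / (2 * Real.sqrt μ))) • f' (xh + a • vh)) :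
    ∀ t : ℝ, 0 ≤ t →
      (⟪(1 + Real.sqrt (μ * s)) • f' xh + Real.sqrt μ • vh + (2 * μ) • (xh - xs),
          v t - vh⟫
        + ⟪vh + Real.sqrt μ • (xh - xs),
            (-((2 * Real.sqrt μ) • v t) - (1 + Real.sqrt (μ * s)) • f' (xh + a • vh))
            - (-((2 * Real.sqrt μ) • vh) - (1 + Real.sqrt (μ * s)) • f' (xh + a • vh))⟫
        = (1 + Real.sqrt (μ * s)) * ⟪f' xh, v t - vh⟫
            - Real.sqrt μ * ⟪vh, v t - vh⟫) ∧
      |(1 + Real.sqrt (μ * s)) * ⟪f' xh, v t - vh⟫ - Real.sqrt μ * ⟪vh, v t - vh⟫|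
        ≤ t * ‖(2 * Real.sqrt μ) • vh + (1 + Real.sqrt (μ * s)) • f' (xh + a • vh)‖
            * ((1 + Real.sqrt (μ * s)) * ‖f' xh‖ + Real.sqrt μ * ‖vh‖) := by

  intro t ht
  have hμ' : 0 < Real.sqrt μ := Real.sqrt_pos.2 hμ
  have hμs : 0 ≤ Real.sqrt (μ * s) := Real.sqrt_nonneg _
  have hsq : Real.sqrt μ * Real.sqrt μ = μ := Real.mul_self_sqrt hμ.le
  set g := f' (xh + a • vh) with hg
  have h2 : (-((2 * Real.sqrt μ) • v t) - (1 + Real.sqrt (μ * s)) • g)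
      - (-((2 * Real.sqrt μ) • vh) - (1 + Real.sqrt (μ * s)) • g)
      = (-(2 * Real.sqrt μ)) • (v t - vh) := by
    module
  constructor
  · rw [h2]
    simp only [inner_add_left, real_inner_smul_left, real_inner_smul_right]
    linear_combination (-2 * ⟪xh - xs, v t - vh⟫) * hsq
  · -- norm bound
    set w := (2 * Real.sqrt μ) • vh + (1 + Real.sqrt (μ * s)) • g with hw
    have hΔ : v t - vh
        = ((Real.exp (-(2 * Real.sqrt μ) * t) - 1) / (2 * Real.sqrt μ)) • w := by
      rw [hV, hw]
      match_scalars <;> field_simp <;> ring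
    have hexp : 1 - Real.exp (-(2 * Real.sqrt μ) * t) ≤ 2 * Real.sqrt μ * t := by
      nlinarith [Real.add_one_le_exp (-(2 * Real.sqrt μ) * t)]
    have hexp1 : Real.exp (-(2 * Real.sqrt μ) * t) ≤ 1 := by
      have : -(2 * Real.sqrt μ) * t ≤ 0 := by nlinarith
      exact Real.exp_le_one_iff.mpr this
    have hnΔ : ‖v t - vh‖ ≤ t * ‖w‖ := by
      have habs : |(Real.exp (-(2 * Real.sqrt μ) * t) - 1) / (2 * Real.sqrt μ)| ≤ t := by
        rw [abs_div, abs_of_pos (by positivity : (0:ℝ) < 2 * Real.sqrt μ),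
          div_le_iff₀ (by positivity)]
        rw [abs_sub_comm, abs_of_nonneg (by linarith)]
        linarith
      rw [hΔ, norm_smul]
      exact mul_le_mul_of_nonneg_right habs (norm_nonneg _)
    have hA : |⟪f' xh, v t - vh⟫| ≤ ‖f' xh‖ * ‖v t - vh‖ := abs_real_inner_le_norm _ _
    have hB : |⟪vh, v t - vh⟫| ≤ ‖vh‖ * ‖v t - vh‖ := abs_real_inner_le_norm _ _
    have h1 : |(1 + Real.sqrt (μ * s)) * ⟪f' xh, v t - vh⟫
        - Real.sqrt μ * ⟪vh, v t - vh⟫|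
        ≤ (1 + Real.sqrt (μ * s)) * |⟪f' xh, v t - vh⟫|
          + Real.sqrt μ * |⟪vh, v t - vh⟫| := by
      calc _ ≤ |(1 + Real.sqrt (μ * s)) * ⟪f' xh, v t - vh⟫|
            + |Real.sqrt μ * ⟪vh, v t - vh⟫| := abs_sub _ _
        _ = _ := by rw [abs_mul, abs_mul, abs_of_nonneg (by linarith), abs_of_nonneg hμ'.le]
    have hn : 0 ≤ ‖f' xh‖ := norm_nonneg _
    have hnv : 0 ≤ ‖vh‖ := norm_nonneg _
    have hΔnn : (0:ℝ) ≤ ‖v t - vh‖ := norm_nonneg _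
    calc |(1 + Real.sqrt (μ * s)) * ⟪f' xh, v t - vh⟫ - Real.sqrt μ * ⟪vh, v t - vh⟫|
        ≤ (1 + Real.sqrt (μ * s)) * |⟪f' xh, v t - vh⟫|
          + Real.sqrt μ * |⟪vh, v t - vh⟫| := h1
      _ ≤ (1 + Real.sqrt (μ * s)) * (‖f' xh‖ * ‖v t - vh‖)
          + Real.sqrt μ * (‖vh‖ * ‖v t - vh‖) := by
            gcongr <;> first | linarith | exact hμ'.le
      _ = ‖v t - vh‖ * ((1 + Real.sqrt (μ * s)) * ‖f' xh‖ + Real.sqrt μ * ‖vh‖) := by ring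
      _ ≤ (t * ‖w‖) * ((1 + Real.sqrt (μ * s)) * ‖f' xh‖ + Real.sqrt μ * ‖vh‖) := by
            have hpos : 0 ≤ (1 + Real.sqrt (μ * s)) * ‖f' xh‖ + Real.sqrt μ * ‖vh‖ := by
              positivity
            exact mul_le_mul_of_nonneg_right hnΔ hpos
      _ = t * ‖w‖ * ((1 + Real.sqrt (μ * s)) * ‖f' xh‖ + Real.sqrt μ * ‖vh‖) := by ring


end
end
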